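/- arXiv:1511.02402 — 2 statements merged into one kernel-verified Lean document; each statement's English description precedes it below -/
import Mathlib

section
/- Let d be symmetric, nonnegative, satisfying the α-relaxed triangle inequality with α ≥ 1. Let S contain distinct elements b_1, b_2 and at least one further element z (so A = S \ {b_1,b_2} is nonempty), and let c_1, c_2 be two distinct elements not in S. Then d(S−b_1+c_1) + d(S−b_2+c_2) ≥ (1/α²)·d(A ∪ {c_1,c_2}). -/
open Finset

noncomputable def dSet {U : Type*} (d : U → U → ℝ) (X : Finset U) : ℝ :=
  (∑ u ∈ X, ∑ v ∈ X, d u v) / 2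

noncomputable def dCross {U : Type*} (d : U → U → ℝ) (X Y : Finset U) : ℝ :=
  ∑ u ∈ X, ∑ v ∈ Y, d u v

/-! Each of the three sets is `A = S \ {b₁, b₂}` with two points added, so expanding each
`dSet` by these two points leaves `d(A)` and the sums `∑_{v ∈ A} d(x, v)`. Everything on the
right is then matched on the left except `d(c₁, c₂)`, which the relaxed triangle inequality,
applied twice along the path `c₁ → b₂ → a → b₁ → c₂` for some `a ∈ A`, bounds by `α²` times
terms of the left-hand side. -/

section Dispersion

variable {U : Type*} {d : U → U → ℝ}

theorem dSet_nonneg (hnn : ∀ u v, 0 ≤ d u v) (X : Finset U) : 0 ≤ dSet d X :=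
  div_nonneg (sum_nonneg fun u _ => sum_nonneg fun v _ => hnn u v) zero_le_two

theorem dSet_insert [DecidableEq U] (hsymm : ∀ u v, d u v = d v u) (hself : ∀ u, d u u = 0)
    {a : U} {X : Finset U} (ha : a ∉ X) :
    dSet d (insert a X) = ∑ v ∈ X, d a v + dSet d X := by
  have hcol : ∑ u ∈ X, d u a = ∑ v ∈ X, d a v := sum_congr rfl fun u _ => hsymm u a
  unfold dSet
  simp only [sum_insert ha, sum_add_distrib, hcol, hself]
  ring

theorem le_sq_mul_of_relaxed_triangle {α : ℝ} (hα : 0 ≤ α) (hsymm : ∀ u v, d u v = d v u)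
    (htri : ∀ u v w, d u v ≤ α * (d v w + d w u)) (u x w y v : U) :
    d u v ≤ α ^ 2 * (d u x + d x w + d w y + d y v) := by
  have tri : ∀ p q r, d p q ≤ α * (d p r + d r q) := fun p q r => by
    rw [hsymm p r, hsymm r q, add_comm]; exact htri p q r
  calc d u v ≤ α * (d u w + d w v) := tri u v w
    _ ≤ α * (α * (d u x + d x w) + α * (d w y + d y v)) := by
        gcongr
        exacts [tri u w x, tri w v y]
    _ = α ^ 2 * (d u x + d x w + d w y + d y v) := by ring

theorem dSet_insert_insert [DecidableEq U] (hsymm : ∀ u v, d u v = d v u)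
    (hself : ∀ u, d u u = 0) {a b : U} {X : Finset U} (hab : a ≠ b) (ha : a ∉ X) (hb : b ∉ X) :
    dSet d (insert a (insert b X)) = d a b + ∑ v ∈ X, d a v + ∑ v ∈ X, d b v + dSet d X := by
  rw [dSet_insert hsymm hself (by simp [hab, ha]), dSet_insert hsymm hself hb, sum_insert hb]
  ring

theorem dSet_insert_pair_le [DecidableEq U] {α : ℝ} (hα : 1 ≤ α) (hnn : ∀ u v, 0 ≤ d u v)
    (hsymm : ∀ u v, d u v = d v u) (hself : ∀ u, d u u = 0)
    (htri : ∀ u v w, d u v ≤ α * (d v w + d w u))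
    {A : Finset U} {a b₁ b₂ c₁ c₂ : U} (ha : a ∈ A) (hb₁ : b₁ ∉ A) (hb₂ : b₂ ∉ A)
    (hc₁ : c₁ ∉ A) (hc₂ : c₂ ∉ A) (hc : c₁ ≠ c₂) (hc₁b₂ : c₁ ≠ b₂) (hc₂b₁ : c₂ ≠ b₁) :
    dSet d (insert c₁ (insert c₂ A)) ≤
      α ^ 2 * (dSet d (insert c₁ (insert b₂ A)) + dSet d (insert c₂ (insert b₁ A))) := by
  rw [dSet_insert_insert hsymm hself hc hc₁ hc₂, dSet_insert_insert hsymm hself hc₁b₂ hc₁ hb₂,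
    dSet_insert_insert hsymm hself hc₂b₁ hc₂ hb₁]
  have hα2 : 1 ≤ α ^ 2 := one_le_pow₀ hα
  have hcc : d c₁ c₂ ≤ α ^ 2 * (d c₁ b₂ + ∑ v ∈ A, d b₂ v + ∑ v ∈ A, d b₁ v + d c₂ b₁) := by
    refine (le_sq_mul_of_relaxed_triangle (zero_le_one.trans hα) hsymm htri
      c₁ b₂ a b₁ c₂).trans ?_
    rw [hsymm a b₁, hsymm b₁ c₂]
    gcongr <;> exact single_le_sum (fun v _ => hnn _ v) ha
  have hrest : ∑ v ∈ A, d c₁ v + ∑ v ∈ A, d c₂ v + dSet d A ≤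
      α ^ 2 * (∑ v ∈ A, d c₁ v + ∑ v ∈ A, d c₂ v + dSet d A) := le_mul_of_one_le_left
    (add_nonneg (add_nonneg (sum_nonneg fun v _ => hnn c₁ v) (sum_nonneg fun v _ => hnn c₂ v))
      (dSet_nonneg hnn A)) hα2
  linarith [mul_nonneg (sq_nonneg α) (dSet_nonneg hnn A)]

end Dispersion

theorem erase_eq_insert_sdiff_pair {U : Type*} [DecidableEq U] {S : Finset U} {b₁ b₂ : U}
    (hb : b₁ ≠ b₂) (hb₂ : b₂ ∈ S) : S.erase b₁ = insert b₂ (S \ {b₁, b₂}) := by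
  ext x
  by_cases hx : x = b₂ <;> simp [hx, hb₂, hb.symm, and_comm]

theorem stmt4 {U : Type*} [DecidableEq U] (d : U → U → ℝ) (α : ℝ) (hα : 1 ≤ α)
    (hnn : ∀ u v, 0 ≤ d u v) (hsymm : ∀ u v, d u v = d v u)
    (hself : ∀ u, d u u = 0)
    (htri : ∀ u v w, d u v ≤ α * (d v w + d w u))
    (S : Finset U) (b₁ b₂ c₁ c₂ : U) (hb : b₁ ≠ b₂) (hb₁ : b₁ ∈ S) (hb₂ : b₂ ∈ S)
    (hA : (S \ {b₁, b₂}).Nonempty)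
    (hc : c₁ ≠ c₂) (hc₁ : c₁ ∉ S) (hc₂ : c₂ ∉ S) :
    dSet d (insert c₁ (S.erase b₁)) + dSet d (insert c₂ (S.erase b₂))
      ≥ (1 / α ^ 2) * dSet d ((S \ {b₁, b₂}) ∪ {c₁, c₂}) := by
  set A := S \ {b₁, b₂} with hAdef
  obtain ⟨a, ha⟩ := hA
  have hAS : A ⊆ S := sdiff_subset
  have hS₁ : S.erase b₁ = insert b₂ A := erase_eq_insert_sdiff_pair hb hb₂
  have hS₂ : S.erase b₂ = insert b₁ A := by
    rw [hAdef, pair_comm]; exact erase_eq_insert_sdiff_pair hb.symm hb₁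
  have hAc : A ∪ ({c₁, c₂} : Finset U) = insert c₁ (insert c₂ A) := by
    ext x; simp only [mem_union, mem_insert, mem_singleton]; tauto
  have hα2 : 0 < α ^ 2 := by positivity
  rw [hS₁, hS₂, hAc, ge_iff_le, one_div_mul_eq_div, div_le_iff₀ hα2, mul_comm]
  exact dSet_insert_pair_le hα hnn hsymm hself htri ha (by simp [hAdef]) (by simp [hAdef])
    (fun h => hc₁ (hAS h)) (fun h => hc₂ (hAS h)) hc (fun h => hc₁ (h ▸ hb₂))
    (fun h => hc₂ (h ▸ hb₁))
end

section
/- Let d be a symmetric function satisfying the α-relaxed triangle inequality with α ≥ 1, and let A and C be disjoint sets with |A| ≥ 1, |C| ≥ 2. Then α(|C|−1)·d(A,C) ≥ |A|·d(C) and α(|A|−1)·d(A,C) ≥ |C|·d(A) hold simultaneously, and consequently, if |A|+|C| = p, then (|A|+|C|−1)·α·d(A,C) ≥ |C|·d(A) + |A|·d(C). -/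
open Finset

/-!
Fix a point `a`. Every pair `v ≠ w` of `X` satisfies `d v w ≤ α (d a w + d a v)`; summing over the
`|X| (|X| - 1)` ordered pairs gives `d(X) ≤ α (|X| - 1) Σ_{v ∈ X} d(a, v)`. Summing this over
`a ∈ A` (resp. `a ∈ C`) yields the two inequalities, and their sum together with
`α d(A, C) ≥ 0` (which the relaxed triangle inequality itself forces, taking `u = v`) gives the third.
-/

section RelaxedTriangle

variable {U : Type*} {d : U → U → ℝ} {α : ℝ}

theorem dCross_comm (hsymm : ∀ u v, d u v = d v u) (X Y : Finset U) :
    dCross d X Y = dCross d Y X := by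
  rw [dCross, dCross, sum_comm]
  exact sum_congr rfl fun _ _ => sum_congr rfl fun _ _ => hsymm _ _

theorem mul_dCross_nonneg (hsymm : ∀ u v, d u v = d v u) (hself : ∀ u, d u u = 0)
    (htri : ∀ u v w, d u v ≤ α * (d v w + d w u)) (X Y : Finset U) :
    0 ≤ α * dCross d X Y := by
  rw [dCross, mul_sum]
  refine sum_nonneg fun u _ => ?_
  rw [mul_sum]
  refine sum_nonneg fun v _ => ?_
  have := htri u u v
  rw [hself, hsymm v u] at this
  linarith

theorem dSet_le_mul_sum_dist (hsymm : ∀ u v, d u v = d v u) (hself : ∀ u, d u u = 0)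
    (htri : ∀ u v w, d u v ≤ α * (d v w + d w u)) (X : Finset U) (a : U) :
    dSet d X ≤ α * ((X.card : ℝ) - 1) * ∑ v ∈ X, d a v := by
  classical
  set S := ∑ v ∈ X, d a v
  suffices ∑ v ∈ X, ∑ w ∈ X, d v w ≤ 2 * (α * ((X.card : ℝ) - 1) * S) by
    rw [dSet]; linarith
  calc ∑ v ∈ X, ∑ w ∈ X, d v w
      = ∑ v ∈ X, ∑ w ∈ X.erase v, d v w :=
        sum_congr rfl fun v _ => (sum_erase _ (hself v)).symm
    _ ≤ ∑ v ∈ X, ∑ w ∈ X.erase v, α * (d a w + d a v) := by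
        gcongr with v _ w
        rw [← hsymm w a]
        exact htri v w a
    _ = ∑ v ∈ X, α * (S - d a v + ((X.card : ℝ) - 1) * d a v) := by
        refine sum_congr rfl fun v hv => ?_
        rw [← mul_sum, sum_add_distrib, sum_erase_eq_sub hv, sum_const, card_erase_of_mem hv,
          nsmul_eq_mul, Nat.cast_pred (card_pos.mpr ⟨v, hv⟩)]
    _ = 2 * (α * ((X.card : ℝ) - 1) * S) := by
        rw [← mul_sum, sum_add_distrib, sum_sub_distrib, sum_const, nsmul_eq_mul, ← mul_sum]
        ring

theorem card_mul_dSet_le (hsymm : ∀ u v, d u v = d v u) (hself : ∀ u, d u u = 0)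
    (htri : ∀ u v w, d u v ≤ α * (d v w + d w u)) (Y X : Finset U) :
    (Y.card : ℝ) * dSet d X ≤ α * ((X.card : ℝ) - 1) * dCross d Y X := by
  calc (Y.card : ℝ) * dSet d X = ∑ _a ∈ Y, dSet d X := by rw [sum_const, nsmul_eq_mul]
    _ ≤ ∑ a ∈ Y, α * ((X.card : ℝ) - 1) * ∑ v ∈ X, d a v :=
        sum_le_sum fun a _ => dSet_le_mul_sum_dist hsymm hself htri X a
    _ = α * ((X.card : ℝ) - 1) * dCross d Y X := by rw [dCross, mul_sum]

end RelaxedTriangle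

theorem stmt9_general {U : Type*} (d : U → U → ℝ) (α : ℝ)
    (hsymm : ∀ u v, d u v = d v u)
    (hself : ∀ u, d u u = 0)
    (htri : ∀ u v w, d u v ≤ α * (d v w + d w u))
    (A C : Finset U) (p : ℕ) :
    (α * ((C.card : ℝ) - 1) * dCross d A C ≥ (A.card : ℝ) * dSet d C
      ∧ α * ((A.card : ℝ) - 1) * dCross d A C ≥ (C.card : ℝ) * dSet d A)
    ∧ (A.card + C.card = p →
        ((A.card : ℝ) + (C.card : ℝ) - 1) * α * dCross d A C
          ≥ (C.card : ℝ) * dSet d A + (A.card : ℝ) * dSet d C) := by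
  have h_dC : (A.card : ℝ) * dSet d C ≤ α * ((C.card : ℝ) - 1) * dCross d A C :=
    card_mul_dSet_le hsymm hself htri A C
  have h_dA : (C.card : ℝ) * dSet d A ≤ α * ((A.card : ℝ) - 1) * dCross d A C := by
    rw [dCross_comm hsymm A C]
    exact card_mul_dSet_le hsymm hself htri C A
  have hnonneg : 0 ≤ α * dCross d A C := mul_dCross_nonneg hsymm hself htri A C
  exact ⟨⟨h_dC, h_dA⟩, fun _ => by linear_combination h_dC + h_dA + hnonneg⟩

theorem stmt9 {U : Type*} [DecidableEq U] (d : U → U → ℝ) (α : ℝ) (hα : 1 ≤ α)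
    (hnn : ∀ u v, 0 ≤ d u v) (hsymm : ∀ u v, d u v = d v u)
    (hself : ∀ u, d u u = 0)
    (htri : ∀ u v w, d u v ≤ α * (d v w + d w u))
    (A C : Finset U) (hAC : Disjoint A C)
    (hA : 1 ≤ A.card) (hC : 2 ≤ C.card) (p : ℕ) :
    (α * ((C.card : ℝ) - 1) * dCross d A C ≥ (A.card : ℝ) * dSet d C
      ∧ α * ((A.card : ℝ) - 1) * dCross d A C ≥ (C.card : ℝ) * dSet d A)
    ∧ (A.card + C.card = p →
        ((A.card : ℝ) + (C.card : ℝ) - 1) * α * dCross d A C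
          ≥ (C.card : ℝ) * dSet d A + (A.card : ℝ) * dSet d C) :=
  stmt9_general d α hsymm hself htri A C p
end
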